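/- arXiv:0809.3575 — 2 statements merged into one kernel-verified Lean document; each statement's English description precedes it below -/
import Mathlib

section
/- Let 𝒜 be an abelian category and let (f₀,f₁) : a → b be a morphism of arrows, with a : A₁ → A₀ and b : B₁ → B₀. Let K be the pullback of b : B₁ → B₀ along f₀ : A₀ → B₀, with projections k : K → A₀ and κ : K → B₁, and let k' : A₁ → K be the morphism determined by k ∘ k' = a and κ ∘ k' = f₁. Then (k, id_{A₁}) : k' → a is a morphism of arrows, κ is a homotopy from the composite (f₀,f₁) ∘ (k, id_{A₁}) to the zero morphism k' → b, and for every arrow x : X₁ → X₀, every morphism (u₀,u₁) : x → a and every homotopy φ : X₀ → B₁ from (f₀,f₁) ∘ (u₀,u₁) to zero, there exists a unique morphism v₀ : X₀ → K with k ∘ v₀ = u₀ and κ ∘ v₀ = φ, and (v₀, u₁) : x → k' is a morphism of arrows with (k, id_{A₁}) ∘ (v₀, u₁) = (u₀, u₁). -/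
open CategoryTheory CategoryTheory.Limits

universe v u

/-- A morphism in the arrow (2-)category `𝒜^[1]` from `a : A₁ ⟶ A₀` to `b : B₁ ⟶ B₀`:
a pair `(f₀, f₁)` with `f₀ ∘ a = b ∘ f₁`. -/
structure ArrowMor {C : Type u} [Category.{v} C] {A₁ A₀ B₁ B₀ : C}
    (a : A₁ ⟶ A₀) (b : B₁ ⟶ B₀) where
  f₀ : A₀ ⟶ B₀
  f₁ : A₁ ⟶ B₁
  comm : a ≫ f₀ = f₁ ≫ b

namespace ArrowMor

variable {C : Type u} [Category.{v} C] {A₁ A₀ B₁ B₀ D₁ D₀ : C}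
  {a : A₁ ⟶ A₀} {b : B₁ ⟶ B₀} {d : D₁ ⟶ D₀}

theorem ext' {f g : ArrowMor a b} (h0 : f.f₀ = g.f₀) (h1 : f.f₁ = g.f₁) : f = g := by
  cases f; cases g; simp_all

/-- The identity morphism of an arrow. -/
def id (a : A₁ ⟶ A₀) : ArrowMor a a := ⟨𝟙 _, 𝟙 _, by simp⟩

/-- (Diagrammatic order) composition of morphisms of arrows. -/
def comp (f : ArrowMor a b) (g : ArrowMor b d) : ArrowMor a d :=
  ⟨f.f₀ ≫ g.f₀, f.f₁ ≫ g.f₁, by rw [← Category.assoc, f.comm, Category.assoc, g.comm,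
    Category.assoc]⟩

end ArrowMor

section Htpy

variable {C : Type u} [Category.{v} C] [Preadditive C] {A₁ A₀ B₁ B₀ : C}
  {a : A₁ ⟶ A₀} {b : B₁ ⟶ B₀}

/-- `α : A₀ ⟶ B₁` is a homotopy from `(f₀,f₁)` to `(g₀,g₁)` if `f₁ - g₁ = α ∘ a`
and `f₀ - g₀ = b ∘ α`. -/
def IsHomotopy (f g : ArrowMor a b) (α : A₀ ⟶ B₁) : Prop :=
  f.f₁ - g.f₁ = a ≫ α ∧ f.f₀ - g.f₀ = α ≫ b

/-- Two morphisms of arrows are homotopic if there is a homotopy between them. -/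
def Homotopic (a : A₁ ⟶ A₀) (b : B₁ ⟶ B₀) (f g : ArrowMor a b) : Prop :=
  ∃ α : A₀ ⟶ B₁, IsHomotopy f g α

theorem Homotopic.refl (f : ArrowMor a b) : Homotopic a b f f :=
  ⟨0, by simp [IsHomotopy]⟩

theorem Homotopic.symm {f g : ArrowMor a b} (h : Homotopic a b f g) : Homotopic a b g f := by
  obtain ⟨α, h₁, h₀⟩ := h
  refine ⟨-α, ?_, ?_⟩
  · rw [Preadditive.comp_neg, ← h₁, neg_sub]
  · rw [Preadditive.neg_comp, ← h₀, neg_sub]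

theorem Homotopic.trans {f g h : ArrowMor a b} (h₁ : Homotopic a b f g)
    (h₂ : Homotopic a b g h) : Homotopic a b f h := by
  obtain ⟨α, hα₁, hα₀⟩ := h₁
  obtain ⟨β, hβ₁, hβ₀⟩ := h₂
  refine ⟨α + β, ?_, ?_⟩
  · rw [Preadditive.comp_add, ← hα₁, ← hβ₁]; abel
  · rw [Preadditive.add_comp, ← hα₀, ← hβ₀]; abel

/-- Homotopy of morphisms of arrows is an equivalence relation. -/
def homSetoid (a : A₁ ⟶ A₀) (b : B₁ ⟶ B₀) : Setoid (ArrowMor a b) :=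
  ⟨Homotopic a b, ⟨Homotopic.refl, Homotopic.symm, Homotopic.trans⟩⟩

theorem Homotopic.comp_right {D₁ D₀ : C} {d : D₁ ⟶ D₀} {f g : ArrowMor a b}
    (h : Homotopic a b f g) (w : ArrowMor b d) :
    Homotopic a d (f.comp w) (g.comp w) := by
  obtain ⟨α, h₁, h₀⟩ := h
  refine ⟨α ≫ w.f₁, ?_, ?_⟩
  · rw [ArrowMor.comp, ArrowMor.comp, ← Preadditive.sub_comp, h₁, Category.assoc]
  · rw [ArrowMor.comp, ArrowMor.comp, ← Preadditive.sub_comp, h₀, Category.assoc,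
      Category.assoc, w.comm]

theorem Homotopic.comp_left {D₁ D₀ : C} {d : D₁ ⟶ D₀} {f g : ArrowMor b d}
    (h : Homotopic b d f g) (w : ArrowMor a b) :
    Homotopic a d (w.comp f) (w.comp g) := by
  obtain ⟨α, h₁, h₀⟩ := h
  refine ⟨w.f₀ ≫ α, ?_, ?_⟩
  · rw [ArrowMor.comp, ArrowMor.comp, ← Preadditive.comp_sub, h₁, ← Category.assoc,
      ← Category.assoc, w.comm]
  · rw [ArrowMor.comp, ArrowMor.comp, ← Preadditive.comp_sub, h₀, Category.assoc]

end Htpy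

section KerCoker

variable {C : Type u} [Category.{v} C] [Abelian C] {A₁ A₀ B₁ B₀ : C}
  {a : A₁ ⟶ A₀} {b : B₁ ⟶ B₀}

/-- The induced morphism `ker a ⟶ ker b`. -/
noncomputable abbrev ArrowMor.kerMap (f : ArrowMor a b) : kernel a ⟶ kernel b :=
  kernel.map a b f.f₁ f.f₀ f.comm

/-- The induced morphism `coker a ⟶ coker b`. -/
noncomputable abbrev ArrowMor.cokerMap (f : ArrowMor a b) : cokernel a ⟶ cokernel b :=
  cokernel.map a b f.f₁ f.f₀ f.comm

end KerCoker

/-! A homotopy `φ` from `(f₀,f₁) ∘ (u₀,u₁)` to zero consists of the two equations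
`u₀ ≫ f₀ = φ ≫ b` and `u₁ ≫ f₁ = x ≫ φ`. The first is exactly a cone over the pullback square,
so it gives a unique `v₀ = (u₀, φ)`; the second says that `v₀` is compatible with
`k' = (a, f₁)`, i.e. that `(v₀, u₁)` is a morphism of arrows. -/

theorem isHomotopy_zero_iff {C : Type u} [Category.{v} C] [Preadditive C] {A₁ A₀ B₁ B₀ : C}
    {a : A₁ ⟶ A₀} {b : B₁ ⟶ B₀} {f : ArrowMor a b} {α : A₀ ⟶ B₁} {h : a ≫ 0 = 0 ≫ b} :
    IsHomotopy f ⟨0, 0, h⟩ α ↔ f.f₁ = a ≫ α ∧ f.f₀ = α ≫ b := by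
  simp only [IsHomotopy, sub_zero]

theorem CategoryTheory.Limits.pullback.existsUnique_lift {C : Type u} [Category.{v} C] {X Y Z W : C}
    {f : X ⟶ Z} {g : Y ⟶ Z} [HasPullback f g] (p : W ⟶ X) (q : W ⟶ Y) (w : p ≫ f = q ≫ g) :
    ∃! v : W ⟶ pullback f g, v ≫ pullback.fst f g = p ∧ v ≫ pullback.snd f g = q :=
  ⟨pullback.lift p q w, ⟨pullback.lift_fst p q w, pullback.lift_snd p q w⟩,
    fun _ ⟨hp, hq⟩ => pullback.hom_ext (by rw [hp, pullback.lift_fst])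
      (by rw [hq, pullback.lift_snd])⟩

namespace ArrowMor

variable {C : Type u} [Category.{v} C] {A₁ A₀ B₁ B₀ X₁ X₀ : C}
  {a : A₁ ⟶ A₀} {b : B₁ ⟶ B₀} {x : X₁ ⟶ X₀}

@[simp] theorem comp_f₀ {D₁ D₀ : C} {d : D₁ ⟶ D₀} (f : ArrowMor a b) (g : ArrowMor b d) :
    (f.comp g).f₀ = f.f₀ ≫ g.f₀ := rfl

@[simp] theorem comp_f₁ {D₁ D₀ : C} {d : D₁ ⟶ D₀} (f : ArrowMor a b) (g : ArrowMor b d) :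
    (f.comp g).f₁ = f.f₁ ≫ g.f₁ := rfl

variable (f : ArrowMor a b) [HasPullback f.f₀ b]

/-- The arrow `k' : A₁ ⟶ A₀ ×_{B₀} B₁` of the 2-kernel of `f`. -/
noncomputable abbrev twoKer : A₁ ⟶ pullback f.f₀ b :=
  pullback.lift a f.f₁ f.comm

/-- The morphism of arrows `(k, 𝟙) : k' ⟶ a`. -/
noncomputable def twoKerι : ArrowMor f.twoKer a :=
  ⟨pullback.fst f.f₀ b, 𝟙 A₁, by rw [Category.id_comp, pullback.lift_fst]⟩

@[simp] theorem twoKerι_f₀ : f.twoKerι.f₀ = pullback.fst f.f₀ b := rfl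

@[simp] theorem twoKerι_f₁ : f.twoKerι.f₁ = 𝟙 A₁ := rfl

theorem isHomotopy_twoKerι_comp_zero [Preadditive C] {h : f.twoKer ≫ 0 = 0 ≫ b} :
    IsHomotopy (f.twoKerι.comp f) ⟨0, 0, h⟩ (pullback.snd f.f₀ b) := by
  rw [isHomotopy_zero_iff]
  exact ⟨by rw [comp_f₁, twoKerι_f₁, Category.id_comp, pullback.lift_snd],
    by rw [comp_f₀, twoKerι_f₀, pullback.condition]⟩

theorem comp_eq_comp_twoKer {u : ArrowMor x a} {φ : X₀ ⟶ B₁} (hφ : u.f₁ ≫ f.f₁ = x ≫ φ)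
    {v₀ : X₀ ⟶ pullback f.f₀ b} (hfst : v₀ ≫ pullback.fst f.f₀ b = u.f₀)
    (hsnd : v₀ ≫ pullback.snd f.f₀ b = φ) : x ≫ v₀ = u.f₁ ≫ f.twoKer :=
  pullback.hom_ext (by simp only [Category.assoc, hfst, u.comm, pullback.lift_fst])
    (by simp only [Category.assoc, hsnd, hφ, pullback.lift_snd])

theorem comp_twoKerι_eq {u : ArrowMor x a} {v₀ : X₀ ⟶ pullback f.f₀ b}
    (hfst : v₀ ≫ pullback.fst f.f₀ b = u.f₀) (hcomm : x ≫ v₀ = u.f₁ ≫ f.twoKer) :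
    comp ⟨v₀, u.f₁, hcomm⟩ f.twoKerι = u :=
  ext' hfst (Category.comp_id _)

end ArrowMor

variable {C : Type u} [Category.{v} C] [Abelian C]

/-- the 2-kernel in `𝒜^[1]`.  Let `(f₀,f₁) : a ⟶ b` be a morphism of
arrows, `K` the pullback of `b` along `f₀` with projections `k = fst : K ⟶ A₀` and
`κ = snd : K ⟶ B₁`, and `k' : A₁ ⟶ K` determined by `k ∘ k' = a`, `κ ∘ k' = f₁`.  Then
`(k, 𝟙_{A₁}) : k' ⟶ a` is a morphism of arrows, `κ` is a homotopy from
`(f₀,f₁) ∘ (k,𝟙)` to zero, and for every arrow `x`, morphism `(u₀,u₁) : x ⟶ a` and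
homotopy `φ` from `(f₀,f₁) ∘ (u₀,u₁)` to zero there is a unique `v₀ : X₀ ⟶ K` with
`k ∘ v₀ = u₀` and `κ ∘ v₀ = φ`; moreover `(v₀,u₁)` is a morphism of arrows `x ⟶ k'`
with `(k,𝟙) ∘ (v₀,u₁) = (u₀,u₁)`. -/
theorem twoKernel_spec {A₁ A₀ B₁ B₀ : C} (a : A₁ ⟶ A₀) (b : B₁ ⟶ B₀)
    (f : ArrowMor a b) :
    (pullback.lift a f.f₁ f.comm ≫ pullback.fst f.f₀ b = 𝟙 A₁ ≫ a) ∧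
    IsHomotopy
      (ArrowMor.comp
        (⟨pullback.fst f.f₀ b, 𝟙 A₁, by rw [Category.id_comp]; exact pullback.lift_fst _ _ _⟩ :
          ArrowMor (pullback.lift a f.f₁ f.comm) a) f)
      (⟨0, 0, by simp⟩ : ArrowMor (pullback.lift a f.f₁ f.comm) b)
      (pullback.snd f.f₀ b) ∧
    ∀ (X₁ X₀ : C) (x : X₁ ⟶ X₀) (u : ArrowMor x a) (φ : X₀ ⟶ B₁),
      IsHomotopy (u.comp f) (⟨0, 0, by simp⟩ : ArrowMor x b) φ →
      (∃! v₀ : X₀ ⟶ pullback f.f₀ b,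
        v₀ ≫ pullback.fst f.f₀ b = u.f₀ ∧ v₀ ≫ pullback.snd f.f₀ b = φ) ∧
      ∀ v₀ : X₀ ⟶ pullback f.f₀ b,
        (v₀ ≫ pullback.fst f.f₀ b = u.f₀ ∧ v₀ ≫ pullback.snd f.f₀ b = φ) →
        ∃ hcomm : x ≫ v₀ = u.f₁ ≫ pullback.lift a f.f₁ f.comm,
          ArrowMor.comp (⟨v₀, u.f₁, hcomm⟩ : ArrowMor x (pullback.lift a f.f₁ f.comm))
            (⟨pullback.fst f.f₀ b, 𝟙 A₁, by rw [Category.id_comp]; exact pullback.lift_fst _ _ _⟩ :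
              ArrowMor (pullback.lift a f.f₁ f.comm) a) = u := by
  refine ⟨pullback.lift_fst _ _ _ |>.trans (Category.id_comp a).symm,
    f.isHomotopy_twoKerι_comp_zero, fun X₁ X₀ x u φ hφ => ?_⟩
  obtain ⟨hφ₁, hφ₀⟩ := isHomotopy_zero_iff.mp hφ
  refine ⟨pullback.existsUnique_lift u.f₀ φ hφ₀, fun v₀ ⟨hfst, hsnd⟩ => ?_⟩
  have hcomm := f.comp_eq_comp_twoKer hφ₁ hfst hsnd
  exact ⟨hcomm, f.comp_twoKerι_eq hfst hcomm⟩
end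

section
/- Let 𝒜 be an abelian category and let a : A₁ → A₀ and b : B₁ → B₀ be morphisms of 𝒜 such that A₁ and B₁ are injective objects. If (f₀,f₁) : a → b is a morphism of arrows such that the induced morphisms ker a → ker b and coker a → coker b are isomorphisms, then (f₀,f₁) is a homotopy equivalence: there exists a morphism of arrows (g₀,g₁) : b → a such that (g₀,g₁) ∘ (f₀,f₁) is homotopic to the identity of a and (f₀,f₁) ∘ (g₀,g₁) is homotopic to the identity of b. -/
open CategoryTheory CategoryTheory.Limits

universe v u

/-!
A morphism of arrows `f : a ⟶ b` gives the complex `A₁ ⟶ A₀ ⊞ B₁ ⟶ B₀` with maps `(a, f₁)` and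
`(f₀, -b)`. It is exact at `A₁` when `ker a ⟶ ker b` is mono, at `B₀` when `coker a ⟶ coker b` is
epi, and in the middle when the first is epi and the second mono, so here it is short exact. As
`A₁` is injective it splits; writing a splitting as `r = (r₀, r₁) : A₀ ⊞ B₁ ⟶ A₁` and
`s = (s₀, s₁) : B₀ ⟶ A₀ ⊞ B₁`, the pair `(s₀, r₁)` is a homotopy inverse of `f`, with homotopies
`-r₀` and `s₁`.
-/

namespace ArrowMor

section Cone

variable {C : Type u} [Category.{v} C] [Preadditive C] [HasBinaryBiproducts C]
  {A₁ A₀ B₁ B₀ : C} {a : A₁ ⟶ A₀} {b : B₁ ⟶ B₀}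

-- Reducible, so that `simp` sees `f.cone.X₂` as `A₀ ⊞ B₁`.
@[simps!]
noncomputable abbrev cone (f : ArrowMor a b) : ShortComplex C :=
  ShortComplex.mk (biprod.lift a f.f₁) (biprod.desc f.f₀ (-b)) (by simp [f.comm])

variable (f : ArrowMor a b) (σ : f.cone.Splitting)

noncomputable def homotopyInverse : ArrowMor b a where
  f₀ := σ.s ≫ biprod.fst
  f₁ := biprod.inr ≫ σ.r
  comm := by
    rw [eq_comm]
    simpa [← sub_eq_add_neg, sub_eq_zero] using biprod.inr ≫= σ.id =≫ biprod.fst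

theorem homotopic_comp_homotopyInverse :
    Homotopic a a (f.comp (f.homotopyInverse σ)) (id a) := by
  have h₁ : a ≫ biprod.inl ≫ σ.r + f.f₁ ≫ biprod.inr ≫ σ.r = 𝟙 A₁ := by
    simpa [biprod.lift_eq] using σ.f_r
  have h₀ : (biprod.inl ≫ σ.r) ≫ a + f.f₀ ≫ σ.s ≫ biprod.fst = 𝟙 A₀ := by
    simpa using biprod.inl ≫= σ.id =≫ biprod.fst
  refine ⟨-(biprod.inl ≫ σ.r), ?_, ?_⟩
  · simp only [comp, homotopyInverse, id, ← h₁, Preadditive.comp_neg]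
    abel
  · simp only [comp, homotopyInverse, id, ← h₀, Preadditive.neg_comp]
    abel

theorem homotopic_homotopyInverse_comp :
    Homotopic b b ((f.homotopyInverse σ).comp f) (id b) := by
  have h₁ : (biprod.inr ≫ σ.r) ≫ f.f₁ - b ≫ σ.s ≫ biprod.snd = 𝟙 B₁ := by
    simpa [← sub_eq_add_neg] using biprod.inr ≫= σ.id =≫ biprod.snd
  have h₀ : (σ.s ≫ biprod.fst) ≫ f.f₀ - (σ.s ≫ biprod.snd) ≫ b = 𝟙 B₀ := by
    simpa [biprod.desc_eq, sub_eq_add_neg] using σ.s_g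
  refine ⟨σ.s ≫ biprod.snd, ?_, ?_⟩
  · simp only [comp, homotopyInverse, id, ← h₁]
    abel
  · simp only [comp, homotopyInverse, id, ← h₀]
    abel

end Cone

section Abelian

variable {C : Type u} [Category.{v} C] [Abelian C] {A₁ A₀ B₁ B₀ : C}
  {a : A₁ ⟶ A₀} {b : B₁ ⟶ B₀} (f : ArrowMor a b)

theorem mono_cone_f [Mono f.kerMap] : Mono f.cone.f := by
  refine Preadditive.mono_of_cancel_zero _ fun {T} x hx => ?_
  have hxa : x ≫ a = 0 := by simpa using hx =≫ biprod.fst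
  have hxf : x ≫ f.f₁ = 0 := by simpa using hx =≫ biprod.snd
  have hlift : kernel.lift a x hxa = 0 := by
    rw [← cancel_mono (f.kerMap ≫ kernel.ι b)]
    simpa using hxf
  rw [← kernel.lift_ι a x hxa, hlift, zero_comp]

theorem epi_cone_g [Epi f.cokerMap] : Epi f.cone.g := by
  refine Preadditive.epi_of_cancel_zero _ fun {T} x hx => ?_
  have hbx : b ≫ x = 0 := by simpa using biprod.inr ≫= hx
  have hfx : f.f₀ ≫ x = 0 := by simpa using biprod.inl ≫= hx
  have hdesc : cokernel.desc b x hbx = 0 := by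
    rw [← cancel_epi (cokernel.π a ≫ f.cokerMap)]
    simpa using hfx
  rw [← cokernel.π_desc b x hbx, hdesc, comp_zero]

theorem cone_exact [Epi f.kerMap] [Mono f.cokerMap] : f.cone.Exact := by
  rw [ShortComplex.exact_iff_exact_up_to_refinements]
  intro T x hx
  have hx₀₁ : x ≫ biprod.fst ≫ f.f₀ = x ≫ biprod.snd ≫ b := by
    simpa [biprod.desc_eq, sub_eq_zero, ← sub_eq_add_neg] using hx
  have hx₀ : (x ≫ biprod.fst) ≫ cokernel.π a = 0 := by
    rw [← cancel_mono f.cokerMap]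
    simp [reassoc_of% hx₀₁]
  obtain ⟨T', π, hπ, y₀, hy₀⟩ :=
    (CokernelCofork.IsColimit.comp_π_eq_zero_iff_up_to_refinements
      (cokernelIsCokernel a) _).1 hx₀
  have hz : (π ≫ x ≫ biprod.snd - y₀ ≫ f.f₁) ≫ b = 0 := by
    rw [Preadditive.sub_comp, sub_eq_zero]
    simp only [Category.assoc, ← hx₀₁, ← f.comm, reassoc_of% hy₀]
  obtain ⟨T'', π', hπ', k, hk⟩ :=
    surjective_up_to_refinements_of_epi f.kerMap (kernel.lift b _ hz)
  have hk' : π' ≫ (π ≫ x ≫ biprod.snd - y₀ ≫ f.f₁) = k ≫ kernel.ι a ≫ f.f₁ := by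
    simpa using hk =≫ kernel.ι b
  refine ⟨T'', π' ≫ π, epi_comp _ _, π' ≫ y₀ + k ≫ kernel.ι a, ?_⟩
  ext
  · simp [hy₀]
  · simp [← hk']

theorem cone_shortExact [IsIso f.kerMap] [IsIso f.cokerMap] : f.cone.ShortExact where
  exact := f.cone_exact
  mono_f := f.mono_cone_f
  epi_g := f.epi_cone_g

end Abelian

end ArrowMor

variable {C : Type u} [Category.{v} C] [Abelian C]

theorem homotopyEquiv_of_isIso_kerMap_cokerMap_injective_general {A₁ A₀ B₁ B₀ : C}
    (a : A₁ ⟶ A₀) (b : B₁ ⟶ B₀) [Injective A₁]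
    (f : ArrowMor a b) (hker : IsIso f.kerMap) (hcoker : IsIso f.cokerMap) :
    ∃ g : ArrowMor b a,
      Homotopic a a (f.comp g) (ArrowMor.id a) ∧
      Homotopic b b (g.comp f) (ArrowMor.id b) := by
  let σ := f.cone_shortExact.splittingOfInjective
  exact ⟨f.homotopyInverse σ, f.homotopic_comp_homotopyInverse σ,
    f.homotopic_homotopyInverse_comp σ⟩

/-- dual of Statement 4.  Let `𝒜` be abelian and `a : A₁ ⟶ A₀`,
`b : B₁ ⟶ B₀` morphisms of `𝒜` with `A₁` and `B₁` injective.  Any morphism of arrows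
`(f₀,f₁) : a ⟶ b` inducing isomorphisms on kernels and cokernels is a homotopy
equivalence. -/
theorem homotopyEquiv_of_isIso_kerMap_cokerMap_injective {A₁ A₀ B₁ B₀ : C}
    (a : A₁ ⟶ A₀) (b : B₁ ⟶ B₀) [Injective A₁] [Injective B₁]
    (f : ArrowMor a b) (hker : IsIso f.kerMap) (hcoker : IsIso f.cokerMap) :
    ∃ g : ArrowMor b a,
      Homotopic a a (f.comp g) (ArrowMor.id a) ∧
      Homotopic b b (g.comp f) (ArrowMor.id b) :=
  homotopyEquiv_of_isIso_kerMap_cokerMap_injective_general a b f hker hcoker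
end
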